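/- Let p, q ∈ ℂ³ satisfy p₁q₃² = q₂(2p₂q₃ − p₃q₂), q₁q₃ = q₂², and p₂q₃ − p₃q₂ ≠ 0. On the hyperbolic space model H³ = {x ∈ ℝ⁴ : −x₀²+x₁²+x₂²+x₃² = −1, x₀ > 0}, define f*(x) = [p₁(−ix₀+ix₁)² + 2p₂(−ix₀+ix₁)(−x₂+ix₃) + p₃(x₂−ix₃)²]/[q₁(x₂+ix₃)² + 2q₂(−ix₀−ix₁)(x₂+ix₃) + q₃(−ix₀−ix₁)²] on the open set where the denominator is nonzero. With f̂* the degree-0 homogeneous extension to the interior of the light cone and □ = −∂²/∂x₀² + ∂²/∂x₁² + ∂²/∂x₂² + ∂²/∂x₃² the d'Alembert operator, one has □(−|x|²_L·□f̂*) = 0 and −|x|²_L·□f̂* ≢ 0; hence f* is proper biharmonic on its domain in H³. -/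

import Mathlib

/-!
Under the two relations on `p` and `q`, numerator and denominator of `f*` factor over `ℂ` into
linear forms in `x`: `f* = (a·x)(b·x) / (c·x)²`, where, for the complex-bilinear extension
`⟨·,·⟩` of the Lorentzian form, `c` is isotropic and `⟨a, b⟩ = ⟨c, a⟩ = 0`. For such quotients
`□f* = -4⟨c, b⟩ (a·x) / (c·x)³`, so `-|x|²_L □f*` is a multiple of `|x|²_L (a·x) / (c·x)³`,
whose d'Alembertian `|x|²_L (12⟨c, c⟩ (a·x) / (c·x)⁵ - 6⟨c, a⟩ / (c·x)⁴)` vanishes.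
The nonvanishing comes from `⟨c, b⟩ = 4(p₂q₃ − p₃q₂) ≠ 0`.

Second partial derivatives are computed along coordinate lines, on which every function
involved has the form `u(t) (γ + c t)^m`.
-/

open scoped BigOperators

/-- Partial derivative in the `i`-th coordinate direction on Minkowski space `ℝ⁴₁`
(coordinates `x₀,x₁,x₂,x₃`). -/
noncomputable def pd (i : Fin 4) (f : (Fin 4 → ℝ) → ℂ) (x : Fin 4 → ℝ) : ℂ :=
  deriv (fun t : ℝ => f (x + t • (Pi.single i (1 : ℝ) : Fin 4 → ℝ))) 0

/-- The d'Alembert wave operator `□ = −∂₀² + ∂₁² + ∂₂² + ∂₃²`, the tension field of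
Minkowski space `ℝ⁴₁`. -/
noncomputable def box (f : (Fin 4 → ℝ) → ℂ) (x : Fin 4 → ℝ) : ℂ :=
  -(pd 0 (pd 0 f) x) + pd 1 (pd 1 f) x + pd 2 (pd 2 f) x + pd 3 (pd 3 f) x

/-- The Lorentzian square norm `|x|²_L = (x,x)_L = −x₀² + x₁² + x₂² + x₃²`. -/
def lorSq (x : Fin 4 → ℝ) : ℝ :=
  -(x 0) ^ 2 + (x 1) ^ 2 + (x 2) ^ 2 + (x 3) ^ 2

/-- The numerator `p₁(−ix₀+ix₁)² + 2p₂(−ix₀+ix₁)(−x₂+ix₃) + p₃(x₂−ix₃)²`. -/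
noncomputable def numStar (p : Fin 3 → ℂ) (x : Fin 4 → ℝ) : ℂ :=
  p 0 * (-Complex.I * (x 0) + Complex.I * (x 1)) ^ 2
    + 2 * p 1 * (-Complex.I * (x 0) + Complex.I * (x 1)) * (-(x 2 : ℂ) + Complex.I * (x 3))
    + p 2 * ((x 2 : ℂ) - Complex.I * (x 3)) ^ 2

/-- The denominator `q₁(x₂+ix₃)² + 2q₂(−ix₀−ix₁)(x₂+ix₃) + q₃(−ix₀−ix₁)²`. -/
noncomputable def denStar (q : Fin 3 → ℂ) (x : Fin 4 → ℝ) : ℂ :=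
  q 0 * ((x 2 : ℂ) + Complex.I * (x 3)) ^ 2
    + 2 * q 1 * (-Complex.I * (x 0) - Complex.I * (x 1)) * ((x 2 : ℂ) + Complex.I * (x 3))
    + q 2 * (-Complex.I * (x 0) - Complex.I * (x 1)) ^ 2

/-- The dual function `f*` on (the cone over) `H³`; since numerator and denominator are
homogeneous of degree 2, this is also the degree-0 homogeneous extension `f̂* = f*∘π*`
to the interior of the light cone. -/
noncomputable def fStar (p q : Fin 3 → ℂ) (x : Fin 4 → ℝ) : ℂ :=
  numStar p x / denStar q x


open Filter Topology

namespace Minkowski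

def restrictLine (f : (Fin 4 → ℝ) → ℂ) (x : Fin 4 → ℝ) (i : Fin 4) (t : ℝ) : ℂ :=
  f (x + t • Pi.single i 1)

theorem pd_pd_eq_deriv_deriv (i : Fin 4) (f : (Fin 4 → ℝ) → ℂ) (x : Fin 4 → ℝ) :
    pd i (pd i f) x = deriv (deriv (restrictLine f x i)) 0 := by
  have h (s : ℝ) : pd i f (x + s • Pi.single i 1) = deriv (restrictLine f x i) s := by
    simpa [pd, restrictLine, add_smul, add_assoc] using
      deriv_comp_const_add (restrictLine f x i) s 0
  show deriv (fun s : ℝ => pd i f (x + s • Pi.single i 1)) 0 = _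
  simp only [h]

theorem box_eq_deriv_deriv (f : (Fin 4 → ℝ) → ℂ) (x : Fin 4 → ℝ) :
    box f x = -deriv (deriv (restrictLine f x 0)) 0 + deriv (deriv (restrictLine f x 1)) 0
      + deriv (deriv (restrictLine f x 2)) 0 + deriv (deriv (restrictLine f x 3)) 0 := by
  simp only [box, pd_pd_eq_deriv_deriv]

theorem box_congr {f g : (Fin 4 → ℝ) → ℂ} {x : Fin 4 → ℝ} (h : f =ᶠ[𝓝 x] g) :
    box f x = box g x := by
  have hline : ∀ i, restrictLine f x i =ᶠ[𝓝 0] restrictLine g x i := fun i => by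
    have hc : Tendsto (fun t : ℝ => x + t • Pi.single i (1 : ℝ)) (𝓝 0) (𝓝 x) :=
      Continuous.tendsto' (by fun_prop) 0 x (by simp)
    exact hc.eventually h
  simp only [box_eq_deriv_deriv, (hline _).deriv.deriv_eq]

theorem hasDerivAt_affine (α a : ℂ) (t : ℝ) : HasDerivAt (fun t : ℝ => α + a * t) a t := by
  simpa using ((hasDerivAt_id t).ofReal_comp.const_mul a).const_add α

theorem deriv_deriv_mul_affine_zpow {u u' : ℝ → ℂ} {u'' γ c : ℂ} (m : ℤ) (hγ : γ ≠ 0)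
    (hu : ∀ t, HasDerivAt u (u' t) t) (hu' : HasDerivAt u' u'' 0) :
    deriv (deriv fun t : ℝ => u t * (γ + c * t) ^ m) 0 =
      u'' * γ ^ m + 2 * m * c * u' 0 * γ ^ (m - 1)
        + m * (m - 1) * c ^ 2 * u 0 * γ ^ (m - 2) := by
  set w : ℝ → ℂ := fun t => γ + c * t
  have hw : ∀ t, w t ≠ 0 → ∀ k : ℤ,
      HasDerivAt (fun t => w t ^ k) (k * w t ^ (k - 1) * c) t :=
    fun t ht k => (hasDerivAt_zpow k (w t) (Or.inl ht)).comp t (hasDerivAt_affine γ c t)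
  have hw0 : w 0 = γ := by simp [w]
  have hnear : ∀ᶠ t in 𝓝 (0 : ℝ), w t ≠ 0 :=
    (Continuous.continuousAt (by fun_prop)).eventually_ne (hw0 ▸ hγ)
  have hderiv : deriv (fun t => u t * w t ^ m) =ᶠ[𝓝 0]
      fun t => u' t * w t ^ m + u t * (m * w t ^ (m - 1) * c) :=
    hnear.mono fun t ht => ((hu t).mul (hw t ht m)).deriv
  rw [hderiv.deriv_eq]
  have h2 := ((hu'.mul (hw 0 (hw0 ▸ hγ) m)).add
    ((hu 0).mul (((hw 0 (hw0 ▸ hγ) (m - 1)).const_mul (m : ℂ)).mul_const c)))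
  refine h2.deriv.trans ?_
  rw [hw0, sub_sub, one_add_one_eq_two]
  push_cast
  ring

def linForm (a : Fin 4 → ℂ) (x : Fin 4 → ℝ) : ℂ :=
  a 0 * x 0 + a 1 * x 1 + a 2 * x 2 + a 3 * x 3

def lorInner (a b : Fin 4 → ℂ) : ℂ :=
  -(a 0 * b 0) + a 1 * b 1 + a 2 * b 2 + a 3 * b 3

def lorSign (i : Fin 4) : ℂ :=
  if i = 0 then -1 else 1

theorem hasDerivAt_ofReal (t : ℝ) : HasDerivAt (fun t : ℝ => (t : ℂ)) 1 t :=
  (hasDerivAt_id t).ofReal_comp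

theorem linForm_add_smul_single (a : Fin 4 → ℂ) (x : Fin 4 → ℝ) (i : Fin 4) (t : ℝ) :
    linForm a (x + t • Pi.single i 1) = linForm a x + a i * t := by
  fin_cases i <;>
    simp only [linForm, Pi.add_apply, Pi.smul_apply, Pi.single_apply, smul_eq_mul, Fin.isValue,
      Fin.zero_eta, Fin.mk_one, Fin.reduceFinMk, Fin.reduceEq, ↓reduceIte] <;> push_cast <;> ring

theorem lorSq_add_smul_single (x : Fin 4 → ℝ) (i : Fin 4) (t : ℝ) :
    (lorSq (x + t • Pi.single i 1) : ℂ) = lorSq x + lorSign i * ((2 * x i + t) * t) := by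
  fin_cases i <;>
    simp only [lorSq, lorSign, Pi.add_apply, Pi.smul_apply, Pi.single_apply, smul_eq_mul,
      Fin.isValue, Fin.zero_eta, Fin.mk_one, Fin.reduceFinMk, Fin.reduceEq, ↓reduceIte] <;>
    push_cast <;> ring

theorem linForm_smul (k : ℂ) (a : Fin 4 → ℂ) (x : Fin 4 → ℝ) :
    linForm (k • a) x = k * linForm a x := by
  simp only [linForm, Pi.smul_apply, smul_eq_mul]
  ring

theorem lorInner_smul_right (k : ℂ) (a b : Fin 4 → ℂ) :
    lorInner a (k • b) = k * lorInner a b := by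
  simp only [lorInner, Pi.smul_apply, smul_eq_mul]
  ring

variable {a b c : Fin 4 → ℂ} {x : Fin 4 → ℝ}

theorem deriv_deriv_restrictLine_linForm_mul_div_sq (hc : linForm c x ≠ 0) (i : Fin 4) :
    deriv (deriv (restrictLine
      (fun y => linForm a y * linForm b y / linForm c y ^ 2) x i)) 0 =
        2 * a i * b i * linForm c x ^ (-2 : ℤ)
        - 4 * c i * (a i * linForm b x + linForm a x * b i) * linForm c x ^ (-3 : ℤ)
        + 6 * c i ^ 2 * (linForm a x * linForm b x) * linForm c x ^ (-4 : ℤ) := by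
  have hu : ∀ t : ℝ,
      HasDerivAt (fun t : ℝ => (linForm a x + a i * t) * (linForm b x + b i * t))
      (a i * (linForm b x + b i * t) + (linForm a x + a i * t) * b i) t := fun t =>
    (hasDerivAt_affine _ _ t).fun_mul (hasDerivAt_affine _ _ t)
  have hu' : HasDerivAt
      (fun t : ℝ => a i * (linForm b x + b i * t) + (linForm a x + a i * t) * b i)
      (2 * a i * b i) 0 :=
    (((hasDerivAt_affine _ _ 0).const_mul (a i)).fun_add
      ((hasDerivAt_affine _ _ 0).mul_const (b i))).congr_deriv (by ring)
  have hrestr : restrictLine (fun y => linForm a y * linForm b y / linForm c y ^ 2) x i =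
      fun t : ℝ => (linForm a x + a i * t) * (linForm b x + b i * t)
        * (linForm c x + c i * t) ^ (-2 : ℤ) := by
    funext t
    simp [restrictLine, linForm_add_smul_single, div_eq_mul_inv, zpow_neg]
  rw [hrestr, deriv_deriv_mul_affine_zpow (-2) hc hu hu']
  simp only [Int.reduceSub, Int.reduceNeg, Int.cast_neg, Int.cast_ofNat, Complex.ofReal_zero]
  ring

theorem box_linForm_mul_div_sq (hc : linForm c x ≠ 0) :
    box (fun y => linForm a y * linForm b y / linForm c y ^ 2) x =
      2 * lorInner a b / linForm c x ^ 2
        - 4 * (lorInner c a * linForm b x + lorInner c b * linForm a x) / linForm c x ^ 3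
        + 6 * lorInner c c * linForm a x * linForm b x / linForm c x ^ 4 := by
  simp only [box_eq_deriv_deriv, deriv_deriv_restrictLine_linForm_mul_div_sq hc, zpow_neg,
    zpow_ofNat]
  field_simp
  simp only [lorInner]
  ring

theorem deriv_deriv_restrictLine_lorSq_mul_linForm_div_cube (hc : linForm c x ≠ 0)
    (i : Fin 4) :
    deriv (deriv (restrictLine
      (fun y => lorSq y * linForm a y / linForm c y ^ 3) x i)) 0 =
        (2 * lorSign i * linForm a x + 4 * lorSign i * x i * a i) * linForm c x ^ (-3 : ℤ)
        - 6 * c i * (2 * lorSign i * x i * linForm a x + lorSq x * a i) * linForm c x ^ (-4 : ℤ)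
        + 12 * c i ^ 2 * (lorSq x * linForm a x) * linForm c x ^ (-5 : ℤ) := by
  set s := lorSign i
  set ξ : ℂ := (x i : ℂ)
  have hq : ∀ t : ℝ, HasDerivAt (fun t : ℝ => (lorSq x : ℂ) + s * ((2 * ξ + t) * t))
      (s * (2 * ξ + t + t)) t := fun t =>
    ((((hasDerivAt_ofReal t).const_add (2 * ξ)).fun_mul (hasDerivAt_ofReal t)).const_mul
      s |>.const_add _).congr_deriv (by ring)
  have hq' : HasDerivAt (fun t : ℝ => s * (2 * ξ + t + t)) (2 * s) 0 :=
    ((((hasDerivAt_ofReal 0).const_add (2 * ξ)).fun_add (hasDerivAt_ofReal 0)).const_mul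
      s).congr_deriv (by ring)
  have hu : ∀ t : ℝ, HasDerivAt
      (fun t : ℝ => ((lorSq x : ℂ) + s * ((2 * ξ + t) * t)) * (linForm a x + a i * t))
      (s * (2 * ξ + t + t) * (linForm a x + a i * t)
        + ((lorSq x : ℂ) + s * ((2 * ξ + t) * t)) * a i) t := fun t =>
    (hq t).fun_mul (hasDerivAt_affine _ _ t)
  have hu' : HasDerivAt (fun t : ℝ => s * (2 * ξ + t + t) * (linForm a x + a i * t)
        + ((lorSq x : ℂ) + s * ((2 * ξ + t) * t)) * a i)
      (2 * s * linForm a x + 4 * s * ξ * a i) 0 :=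
    ((hq'.fun_mul (hasDerivAt_affine _ _ 0)).fun_add ((hq 0).mul_const (a i))).congr_deriv
      (by push_cast; ring)
  have hrestr : restrictLine (fun y => lorSq y * linForm a y / linForm c y ^ 3) x i =
      fun t : ℝ => ((lorSq x : ℂ) + s * ((2 * ξ + t) * t)) * (linForm a x + a i * t)
        * (linForm c x + c i * t) ^ (-3 : ℤ) := by
    funext t
    simp [restrictLine, linForm_add_smul_single, lorSq_add_smul_single, div_eq_mul_inv,
      zpow_neg, s, ξ]
  rw [hrestr, deriv_deriv_mul_affine_zpow (-3) hc hu hu']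
  simp only [Int.reduceSub, Int.reduceNeg, Int.cast_neg, Int.cast_ofNat, Complex.ofReal_zero]
  ring

theorem box_lorSq_mul_linForm_div_cube (hc : linForm c x ≠ 0) :
    box (fun y => lorSq y * linForm a y / linForm c y ^ 3) x =
      lorSq x * (12 * lorInner c c * linForm a x / linForm c x ^ 5
        - 6 * lorInner c a / linForm c x ^ 4) := by
  simp only [box_eq_deriv_deriv, deriv_deriv_restrictLine_lorSq_mul_linForm_div_cube hc, lorSign,
    Fin.isValue, Fin.reduceEq, ↓reduceIte, zpow_neg, zpow_ofNat]
  field_simp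
  simp only [lorInner, linForm, lorSq]
  ring

theorem continuous_linForm (a : Fin 4 → ℂ) : Continuous (linForm a) := by
  unfold linForm
  fun_prop

theorem box_linForm_mul_div_sq_of_lorInner_eq_zero (hab : lorInner a b = 0)
    (hca : lorInner c a = 0) (hcc : lorInner c c = 0) (hc : linForm c x ≠ 0) :
    box (fun y => linForm a y * linForm b y / linForm c y ^ 2) x =
      -4 * lorInner c b * linForm a x / linForm c x ^ 3 := by
  rw [box_linForm_mul_div_sq hc, hab, hca, hcc]
  field_simp
  ring

theorem box_neg_lorSq_mul_box_eq_zero (hab : lorInner a b = 0) (hca : lorInner c a = 0)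
    (hcc : lorInner c c = 0) (hc : linForm c x ≠ 0) :
    box (fun y => -(lorSq y : ℂ) * box (fun y => linForm a y * linForm b y / linForm c y ^ 2) y)
      x = 0 := by
  have hnear : (fun y => -(lorSq y : ℂ) * box
      (fun y => linForm a y * linForm b y / linForm c y ^ 2) y) =ᶠ[𝓝 x]
        fun y => lorSq y * linForm ((4 * lorInner c b) • a) y / linForm c y ^ 3 :=
    ((continuous_linForm c).continuousAt.eventually_ne hc).mono fun y hy => by
      dsimp only
      rw [box_linForm_mul_div_sq_of_lorInner_eq_zero hab hca hcc hy, linForm_smul]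
      ring
  rw [box_congr hnear, box_lorSq_mul_linForm_div_cube hc, lorInner_smul_right, hca, hcc]
  ring

end Minkowski

namespace FStar

open Minkowski Complex

def vecA (q : Fin 3 → ℂ) : Fin 4 → ℂ :=
  ![-I * q 1, I * q 1, -q 2, I * q 2]

noncomputable def vecB (p q : Fin 3 → ℂ) : Fin 4 → ℂ :=
  (q 2)⁻¹ • ![-I * (2 * p 1 * q 2 - p 2 * q 1), I * (2 * p 1 * q 2 - p 2 * q 1),
    -(p 2 * q 2), I * (p 2 * q 2)]

def vecC (q : Fin 3 → ℂ) : Fin 4 → ℂ :=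
  ![-I * q 2, -I * q 2, q 1, I * q 1]

variable {p q : Fin 3 → ℂ}

theorem q_two_ne_zero (h2 : q 0 * q 2 = q 1 ^ 2) (h3 : p 1 * q 2 - p 2 * q 1 ≠ 0) :
    q 2 ≠ 0 := by
  intro hq
  have hq1 : q 1 = 0 := pow_eq_zero_iff two_ne_zero |>.mp (by rw [← h2, hq, mul_zero])
  exact h3 (by rw [hq, hq1]; ring)

theorem lorInner_vecA_vecB : lorInner (vecA q) (vecB p q) = 0 := by
  simp only [lorInner, vecA, vecB, Pi.smul_apply, Matrix.cons_val, smul_eq_mul]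
  linear_combination (q 2)⁻¹ * (q 2 * (p 2 * q 2)) * I_sq

theorem lorInner_vecC_vecA : lorInner (vecC q) (vecA q) = 0 := by
  simp only [lorInner, vecA, vecC, Matrix.cons_val]
  linear_combination (-(q 1 * q 2)) * I_sq

theorem lorInner_vecC_vecC : lorInner (vecC q) (vecC q) = 0 := by
  simp only [lorInner, vecC, Matrix.cons_val]
  linear_combination (q 1 * q 1) * I_sq

theorem lorInner_vecC_vecB (hq : q 2 ≠ 0) :
    lorInner (vecC q) (vecB p q) = 4 * (p 1 * q 2 - p 2 * q 1) := by
  simp only [lorInner, vecC, vecB, Pi.smul_apply, Matrix.cons_val, smul_eq_mul]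
  linear_combination
    (q 2)⁻¹ * (-2 * q 2 * (2 * p 1 * q 2 - p 2 * q 1) + q 1 * (p 2 * q 2)) * I_sq
    + 4 * (p 1 * q 2 - p 2 * q 1) * mul_inv_cancel₀ hq

theorem numStar_mul_eq_linForm_mul (h1 : p 0 * q 2 ^ 2 = q 1 * (2 * p 1 * q 2 - p 2 * q 1))
    (hq : q 2 ≠ 0) (y : Fin 4 → ℝ) :
    numStar p y * q 2 = linForm (vecA q) y * linForm (vecB p q) y := by
  rw [vecB, linForm_smul]
  simp only [numStar, linForm, vecA, Matrix.cons_val]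
  field_simp
  linear_combination (-I * y 0 + I * y 1) ^ 2 * h1

theorem denStar_mul_eq_linForm_sq (h2 : q 0 * q 2 = q 1 ^ 2) (y : Fin 4 → ℝ) :
    denStar q y * q 2 = linForm (vecC q) y ^ 2 := by
  simp only [denStar, linForm, vecC, Matrix.cons_val]
  linear_combination (y 2 + I * y 3) ^ 2 * h2

theorem fStar_eq (h1 : p 0 * q 2 ^ 2 = q 1 * (2 * p 1 * q 2 - p 2 * q 1))
    (h2 : q 0 * q 2 = q 1 ^ 2) (hq : q 2 ≠ 0) :
    fStar p q = fun y => linForm (vecA q) y * linForm (vecB p q) y / linForm (vecC q) y ^ 2 := by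
  funext y
  rw [fStar, ← mul_div_mul_right _ _ hq, numStar_mul_eq_linForm_mul h1 hq,
    denStar_mul_eq_linForm_sq h2]

theorem denStar_ne_zero_iff (h2 : q 0 * q 2 = q 1 ^ 2) (hq : q 2 ≠ 0) (y : Fin 4 → ℝ) :
    denStar q y ≠ 0 ↔ linForm (vecC q) y ≠ 0 := by
  rw [← mul_ne_zero_iff_right hq, denStar_mul_eq_linForm_sq h2, pow_ne_zero_iff two_ne_zero]

theorem exists_mem_cone_linForm_ne_zero (hq : q 2 ≠ 0) : ∃ x : Fin 4 → ℝ,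
    lorSq x < 0 ∧ 0 < x 0 ∧ linForm (vecC q) x ≠ 0 ∧ linForm (vecA q) x ≠ 0 := by
  by_cases hq1 : q 1 = 0
  · refine ⟨![1, 0, 1 / 2, 0], ?_, by norm_num, ?_, ?_⟩
    · simp only [lorSq, Matrix.cons_val]
      norm_num
    all_goals simp [linForm, vecA, vecC, hq1, hq]
  · refine ⟨![1, 0, 0, 0], ?_, by norm_num, ?_, ?_⟩
    · simp only [lorSq, Matrix.cons_val]
      norm_num
    all_goals simp [linForm, vecA, vecC, hq1, hq]

end FStar

/-- with `p₁q₃² = q₂(2p₂q₃ − p₃q₂)`, `q₁q₃ = q₂²` and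
`p₂q₃ − p₃q₂ ≠ 0`, on the open set `U ∩ {denominator ≠ 0}` inside the light cone one
has `□(−|x|²_L·□f̂*) = 0`, and `−|x|²_L·□f̂*` does not vanish identically there; hence
`f*` is a proper biharmonic function on its domain in the hyperbolic space `H³`. -/
theorem stmt_19 (p q : Fin 3 → ℂ)
    (h1 : p 0 * (q 2) ^ 2 = q 1 * (2 * p 1 * q 2 - p 2 * q 1))
    (h2 : q 0 * q 2 = (q 1) ^ 2)
    (h3 : p 1 * q 2 - p 2 * q 1 ≠ 0) :
    (∀ x : Fin 4 → ℝ, lorSq x < 0 → 0 < x 0 → denStar q x ≠ 0 →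
        box (fun y => -(lorSq y : ℂ) * box (fStar p q) y) x = 0) ∧
    (∃ x : Fin 4 → ℝ, lorSq x < 0 ∧ 0 < x 0 ∧ denStar q x ≠ 0 ∧
        -(lorSq x : ℂ) * box (fStar p q) x ≠ 0) := by
  have hq := FStar.q_two_ne_zero h2 h3
  have hAB := @FStar.lorInner_vecA_vecB p q
  have hCA := @FStar.lorInner_vecC_vecA q
  have hCC := @FStar.lorInner_vecC_vecC q
  rw [FStar.fStar_eq h1 h2 hq]
  refine ⟨fun x _ _ hx => Minkowski.box_neg_lorSq_mul_box_eq_zero hAB hCA hCC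
    ((FStar.denStar_ne_zero_iff h2 hq x).1 hx), ?_⟩
  obtain ⟨x, hS, hx0, hC, hAx⟩ := FStar.exists_mem_cone_linForm_ne_zero hq
  refine ⟨x, hS, hx0, (FStar.denStar_ne_zero_iff h2 hq x).2 hC, ?_⟩
  rw [Minkowski.box_linForm_mul_div_sq_of_lorInner_eq_zero hAB hCA hCC hC,
    FStar.lorInner_vecC_vecB hq]
  have hS' : (lorSq x : ℂ) ≠ 0 := by exact_mod_cast hS.ne
  simp [hS', h3, hC, hAx]
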